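/- Let Λ be a Metzler matrix and p > 0 a vector with Λp < 0 componentwise. If V : [0,∞) → ℝ^l is continuous, V(0) ≤ p componentwise, and whenever V_i(t) = p_i the upper right Dini derivative satisfies D⁺V_i(t) ≤ (ΛV(t))_i < 0, then V(t) ≤ p componentwise for all t ≥ 0. -/

import Mathlib

/-! A coordinate that touches its bound at time `t` with negative upper right Dini derivative
drops strictly below the bound just after `t`; a coordinate strictly below stays below by
continuity. So the closed set `{t | V t ≤ p}` contains, with each of its points, a right
neighbourhood of it, and continuous induction on `[0, t]` gives the claim. -/

open Filter Set Topology

/-- The paper's `D⁺f(t)`. As a real-valued `limsup` it is `0`, not `+∞`,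
when the difference quotients are unbounded above. -/
noncomputable def upperRightDini (f : ℝ → ℝ) (t : ℝ) : ℝ :=
  limsup (fun h : ℝ => (f (t + h) - f t) / h) (𝓝[>] 0)

theorem eventually_lt_of_upperRightDini_neg {f : ℝ → ℝ} {t : ℝ} (hD : upperRightDini f t < 0) :
    ∀ᶠ s in 𝓝[>] t, f s < f t := by
  have hbdd : IsBoundedUnder (· ≤ ·) (𝓝[>] 0) (fun h : ℝ => (f (t + h) - f t) / h) := by
    by_contra hunbdd
    exact hD.ne (Real.limsup_of_not_isBoundedUnder hunbdd)
  have hquot : ∀ᶠ h in 𝓝[>] (0 : ℝ), (f (t + h) - f t) / h < 0 :=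
    eventually_lt_of_limsup_lt hD hbdd
  rw [← add_zero t, ← Filter.map_add_left_nhdsGT, eventually_map, add_zero]
  filter_upwards [hquot, self_mem_nhdsWithin] with h hneg hpos
  exact sub_neg.mp (neg_of_div_neg_left hneg hpos.le)

theorem eventually_le_of_upperRightDini_neg {f : ℝ → ℝ} {t c : ℝ} (hf : ContinuousAt f t)
    (hle : f t ≤ c) (hD : f t = c → upperRightDini f t < 0) : ∀ᶠ s in 𝓝[>] t, f s ≤ c := by
  rcases hle.lt_or_eq with hlt | heq
  · exact nhdsWithin_le_nhds ((hf.eventually_lt_const hlt).mono fun _ => le_of_lt)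
  · exact (eventually_lt_of_upperRightDini_neg (hD heq)).mono fun _ hs => heq ▸ hs.le

theorem le_of_upperRightDini_neg_of_eq {ι : Type*} [Finite ι] {V : ℝ → ι → ℝ} {p : ι → ℝ}
    (hV : Continuous V) (hV0 : V 0 ≤ p)
    (hD : ∀ t, 0 ≤ t → ∀ i, V t i = p i → upperRightDini (V · i) t < 0) :
    ∀ t, 0 ≤ t → V t ≤ p := by
  intro t ht
  have hclosed : IsClosed {s | V s ≤ p} := isClosed_le hV continuous_const
  refine (hclosed.inter isClosed_Icc).Icc_subset_of_forall_mem_nhdsWithin hV0 ?_ ⟨ht, le_rfl⟩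
  rintro s ⟨hs, hs0, -⟩
  exact eventually_all.2 fun i =>
    eventually_le_of_upperRightDini_neg ((continuous_apply i).comp hV).continuousAt (hs i)
      (hD s hs0 i)

theorem invariance_boundary_dini_general {l : ℕ} (Λ : Matrix (Fin l) (Fin l) ℝ)
    (p : Fin l → ℝ)
    (V : ℝ → (Fin l → ℝ))
    (hcont : ∀ i, Continuous (fun t => V t i))
    (hV0 : V 0 ≤ p)
    (hbdry : ∀ t : ℝ, 0 ≤ t → ∀ i, V t i = p i →
      (limsup (fun h : ℝ => (V (t + h) i - V t i) / h) (nhdsWithin 0 (Ioi 0))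
        ≤ Λ.mulVec (V t) i) ∧ Λ.mulVec (V t) i < 0) :
    ∀ t : ℝ, 0 ≤ t → V t ≤ p :=
  le_of_upperRightDini_neg_of_eq (continuous_pi hcont) hV0 fun t ht i heq =>
    (hbdry t ht i heq).1.trans_lt (hbdry t ht i heq).2

theorem invariance_boundary_dini {l : ℕ} (Λ : Matrix (Fin l) (Fin l) ℝ)
    (hM : ∀ i j, i ≠ j → 0 ≤ Λ i j)
    (p : Fin l → ℝ) (hp : ∀ i, 0 < p i) (hΛp : ∀ i, Λ.mulVec p i < 0)
    (V : ℝ → (Fin l → ℝ))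
    (hcont : ∀ i, Continuous (fun t => V t i))
    (hV0 : V 0 ≤ p)
    (hbdry : ∀ t : ℝ, 0 ≤ t → ∀ i, V t i = p i →
      (limsup (fun h : ℝ => (V (t + h) i - V t i) / h) (nhdsWithin 0 (Ioi 0))
        ≤ Λ.mulVec (V t) i) ∧ Λ.mulVec (V t) i < 0) :
    ∀ t : ℝ, 0 ≤ t → V t ≤ p :=
  invariance_boundary_dini_general Λ p V hcont hV0 hbdry
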